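/- arXiv:1602.00100 — 2 statements merged into one kernel-verified Lean document; each statement's English description precedes it below -/
import Mathlib

section
/- Let m ≥ 2 and let u : ℝ^m \ {0} → ℝ be a C² function, positively homogeneous of degree 0 (u(t x) = u(x) for all t > 0, x ≠ 0), which solves the vertical mean curvature equation for a positive continuous function K : ℝ^m \ {0} → (0, ∞). Suppose there exist reals 0 < r₁ ≤ 1 ≤ r₂ such that K(ξ) > (m−1)/‖ξ‖ whenever 0 < ‖ξ‖ < r₁ and K(ξ) < (m−1)/‖ξ‖ whenever ‖ξ‖ > r₂. Then log r₁ ≤ u(ξ) ≤ log r₂ for every ξ with ‖ξ‖ = 1. -/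
/-- `u` solves the vertical mean curvature equation for `K`: for every unit vector `ξ`,
`(1 + ‖∇u‖²) Δu − D²u(∇u, ∇u) = (m−1)(1 + ‖∇u‖²) − (1 + ‖∇u‖²)^{3/2} e^u K(e^u ξ)`,
where `∇u` is the gradient, `D²u` the Hessian, and `Δu` the Laplacian (trace of the
Hessian over the standard orthonormal basis). -/
def SolvesVerticalMeanCurvatureEq (m : ℕ)
    (u K : EuclideanSpace ℝ (Fin m) → ℝ) : Prop :=
  ∀ ξ : EuclideanSpace ℝ (Fin m), ‖ξ‖ = 1 →
    (1 + ‖gradient u ξ‖ ^ 2) *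
        (∑ i : Fin m, fderiv ℝ (fderiv ℝ u) ξ (EuclideanSpace.single i 1)
          (EuclideanSpace.single i 1))
      - fderiv ℝ (fderiv ℝ u) ξ (gradient u ξ) (gradient u ξ)
    = (m - 1 : ℝ) * (1 + ‖gradient u ξ‖ ^ 2)
      - (1 + ‖gradient u ξ‖ ^ 2) ^ ((3 : ℝ) / 2) * Real.exp (u ξ)
        * K (Real.exp (u ξ) • ξ)

/-!
At a maximum point `ξ₀` of `u` on the unit sphere, 0-homogeneity makes `ξ₀` a local maximum of
`u` in the whole space, so `∇u(ξ₀) = 0` and the Hessian is negative semidefinite. The equation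
then reads `Δu(ξ₀) = (m - 1) - e^{u(ξ₀)} K(e^{u(ξ₀)} ξ₀) ≤ 0`, i.e. `K ≥ (m - 1) / ‖·‖` at the
point `e^{u(ξ₀)} ξ₀` of norm `e^{u(ξ₀)}`; the growth condition beyond `r₂` forces
`e^{u(ξ₀)} ≤ r₂`. Symmetrically, at a minimum point `e^{u(ξ₁)} ≥ r₁`.
-/

open Filter Topology

theorem IsLocalMin.deriv_deriv_nonneg {g : ℝ → ℝ} {a : ℝ} (hmin : IsLocalMin g a)
    (hg : ContinuousAt g a) : 0 ≤ deriv (deriv g) a := by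
  by_contra! hneg
  -- the second-derivative test would make `a` a local maximum too, so `g` is locally constant
  have hmax : IsLocalMax g a := isLocalMax_of_deriv_deriv_neg hneg hmin.deriv_eq_zero hg
  have hconst : g =ᶠ[𝓝 a] fun _ => g a := (hmax.and hmin).mono fun _ h => le_antisymm h.1 h.2
  have : deriv (deriv g) a = 0 := by
    rw [hconst.deriv.deriv_eq]
    simp
  exact hneg.ne this

theorem IsLocalMax.deriv_deriv_nonpos {g : ℝ → ℝ} {a : ℝ} (hmax : IsLocalMax g a)
    (hg : ContinuousAt g a) : deriv (deriv g) a ≤ 0 := by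
  have := hmax.neg.deriv_deriv_nonneg hg.neg
  rw [deriv.fun_neg', deriv.fun_neg] at this
  linarith

section LineRestriction

variable {E F : Type*} [NormedAddCommGroup E] [NormedSpace ℝ E] [NormedAddCommGroup F]
  [NormedSpace ℝ F] {u : E → F} {x : E}

theorem deriv_deriv_comp_add_smul (hu : ∀ᶠ y in 𝓝 x, DifferentiableAt ℝ u y)
    (hu' : DifferentiableAt ℝ (fderiv ℝ u) x) (v : E) :
    deriv (deriv fun t : ℝ => u (x + t • v)) 0 = fderiv ℝ (fderiv ℝ u) x v v := by
  have hline : ∀ t : ℝ, HasDerivAt (fun t : ℝ => x + t • v) v t := fun t => by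
    simpa using ((hasDerivAt_id t).smul_const v).const_add x
  have hcont : Tendsto (fun t : ℝ => x + t • v) (𝓝 0) (𝓝 x) := by
    simpa only [zero_smul, add_zero] using (hline 0).continuousAt.tendsto
  have hfirst : deriv (fun t : ℝ => u (x + t • v)) =ᶠ[𝓝 0] fun t => fderiv ℝ u (x + t • v) v :=
    (hcont.eventually hu).mono fun t ht => (ht.hasFDerivAt.comp_hasDerivAt t (hline t)).deriv
  rw [hfirst.deriv_eq]
  have hsecond := (hu'.hasFDerivAt.comp_hasDerivAt_of_eq 0 (hline 0) (by simp)).clm_apply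
    (hasDerivAt_const 0 v)
  simpa only [Function.comp_def, map_zero, add_zero] using hsecond.deriv

theorem IsLocalMin.fderiv_fderiv_apply_nonneg {u : E → ℝ} (hmin : IsLocalMin u x)
    (hu : ContDiffAt ℝ 2 u x) (v : E) : 0 ≤ fderiv ℝ (fderiv ℝ u) x v v := by
  have hdiff : ∀ᶠ y in 𝓝 x, DifferentiableAt ℝ u y :=
    (hu.eventually (by simp)).mono fun _ hy => hy.differentiableAt (by norm_num)
  have hu' : DifferentiableAt ℝ (fderiv ℝ u) x :=
    (hu.fderiv_right (m := 1) (by norm_num)).differentiableAt (by norm_num)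
  have hline : ContinuousAt (fun t : ℝ => x + t • v) 0 := by fun_prop
  rw [← deriv_deriv_comp_add_smul hdiff hu' v]
  exact IsLocalMin.deriv_deriv_nonneg (IsLocalMin.comp_continuous (by simpa using hmin) hline)
    (hu.continuousAt.comp_of_eq hline (by simp))

theorem IsLocalMax.fderiv_fderiv_apply_nonpos {u : E → ℝ} (hmax : IsLocalMax u x)
    (hu : ContDiffAt ℝ 2 u x) (v : E) : fderiv ℝ (fderiv ℝ u) x v v ≤ 0 := by
  have := hmax.neg.fderiv_fderiv_apply_nonneg hu.neg v
  have hneg : fderiv ℝ (fun y => -u y) = fun y => -fderiv ℝ u y := funext fun _ => fderiv_fun_neg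
  rw [hneg, fderiv_fun_neg] at this
  simpa using this

end LineRestriction

section UnitSphere

variable {E : Type*} [NormedAddCommGroup E] [NormedSpace ℝ E] {u : E → ℝ} {ξ : E}

theorem IsMaxOn.isLocalMax_of_smul_invariant
    (hhom : ∀ t : ℝ, 0 < t → ∀ x : E, x ≠ 0 → u (t • x) = u x)
    (hmax : IsMaxOn u (Metric.sphere 0 1) ξ) (hξ : ξ ≠ 0) : IsLocalMax u ξ := by
  filter_upwards [eventually_ne_nhds hξ] with y hy
  rw [← hhom ‖y‖⁻¹ (by positivity) y hy]
  exact hmax (mem_sphere_zero_iff_norm.2 (norm_smul_inv_norm hy))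

theorem IsMinOn.isLocalMin_of_smul_invariant
    (hhom : ∀ t : ℝ, 0 < t → ∀ x : E, x ≠ 0 → u (t • x) = u x)
    (hmin : IsMinOn u (Metric.sphere 0 1) ξ) (hξ : ξ ≠ 0) : IsLocalMin u ξ := by
  filter_upwards [eventually_ne_nhds hξ] with y hy
  rw [← hhom ‖y‖⁻¹ (by positivity) y hy]
  exact hmin (mem_sphere_zero_iff_norm.2 (norm_smul_inv_norm hy))

theorem norm_exp_smul_of_norm_eq_one (hξ : ‖ξ‖ = 1) (s : ℝ) : ‖Real.exp s • ξ‖ = Real.exp s := by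
  rw [norm_smul, Real.norm_of_nonneg (Real.exp_pos s).le, hξ, mul_one]

end UnitSphere

namespace SolvesVerticalMeanCurvatureEq

variable {m : ℕ} {u K : EuclideanSpace ℝ (Fin m) → ℝ} {ξ : EuclideanSpace ℝ (Fin m)}

theorem laplacian_eq_of_fderiv_eq_zero (hsol : SolvesVerticalMeanCurvatureEq m u K)
    (hξ : ‖ξ‖ = 1) (hcrit : fderiv ℝ u ξ = 0) :
    ∑ i : Fin m, fderiv ℝ (fderiv ℝ u) ξ (EuclideanSpace.single i 1) (EuclideanSpace.single i 1)
      = (m - 1 : ℝ) - Real.exp (u ξ) * K (Real.exp (u ξ) • ξ) := by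
  have hgrad : gradient u ξ = 0 := by rw [gradient, hcrit, map_zero]
  have := hsol ξ hξ
  simpa [hgrad, mul_assoc] using this

theorem sub_one_le_of_isLocalMax (hsol : SolvesVerticalMeanCurvatureEq m u K)
    (hξ : ‖ξ‖ = 1) (hu : ContDiffAt ℝ 2 u ξ) (hmax : IsLocalMax u ξ) :
    (m - 1 : ℝ) ≤ Real.exp (u ξ) * K (Real.exp (u ξ) • ξ) := by
  have hΔ := Finset.sum_nonpos fun i (_ : i ∈ Finset.univ) =>
    hmax.fderiv_fderiv_apply_nonpos hu (EuclideanSpace.single i (1 : ℝ))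
  rw [laplacian_eq_of_fderiv_eq_zero hsol hξ hmax.fderiv_eq_zero] at hΔ
  linarith

theorem le_sub_one_of_isLocalMin (hsol : SolvesVerticalMeanCurvatureEq m u K)
    (hξ : ‖ξ‖ = 1) (hu : ContDiffAt ℝ 2 u ξ) (hmin : IsLocalMin u ξ) :
    Real.exp (u ξ) * K (Real.exp (u ξ) • ξ) ≤ m - 1 := by
  have hΔ := Finset.sum_nonneg fun i (_ : i ∈ Finset.univ) =>
    hmin.fderiv_fderiv_apply_nonneg hu (EuclideanSpace.single i (1 : ℝ))
  rw [laplacian_eq_of_fderiv_eq_zero hsol hξ hmin.fderiv_eq_zero] at hΔ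
  linarith

theorem exp_le_of_isLocalMax (hsol : SolvesVerticalMeanCurvatureEq m u K)
    (hξ : ‖ξ‖ = 1) (hu : ContDiffAt ℝ 2 u ξ) (hmax : IsLocalMax u ξ) {r : ℝ}
    (hK : ∀ η : EuclideanSpace ℝ (Fin m), r < ‖η‖ → K η < (m - 1 : ℝ) / ‖η‖) :
    Real.exp (u ξ) ≤ r := by
  by_contra! hlt
  have hKξ := hK _ ((norm_exp_smul_of_norm_eq_one hξ _).symm ▸ hlt)
  rw [norm_exp_smul_of_norm_eq_one hξ, lt_div_iff₀ (Real.exp_pos _)] at hKξ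
  linarith [hsol.sub_one_le_of_isLocalMax hξ hu hmax]

theorem le_exp_of_isLocalMin (hsol : SolvesVerticalMeanCurvatureEq m u K)
    (hξ : ‖ξ‖ = 1) (hu : ContDiffAt ℝ 2 u ξ) (hmin : IsLocalMin u ξ) {r : ℝ}
    (hK : ∀ η : EuclideanSpace ℝ (Fin m), η ≠ 0 → ‖η‖ < r → (m - 1 : ℝ) / ‖η‖ < K η) :
    r ≤ Real.exp (u ξ) := by
  by_contra! hlt
  have hne : Real.exp (u ξ) • ξ ≠ 0 := by
    rw [← norm_ne_zero_iff, norm_exp_smul_of_norm_eq_one hξ]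
    exact (Real.exp_pos _).ne'
  have hKξ := hK _ hne ((norm_exp_smul_of_norm_eq_one hξ _).symm ▸ hlt)
  rw [norm_exp_smul_of_norm_eq_one hξ, div_lt_iff₀ (Real.exp_pos _)] at hKξ
  linarith [hsol.le_sub_one_of_isLocalMin hξ hu hmin]

end SolvesVerticalMeanCurvatureEq

theorem c0_estimate_vertical_mean_curvature_general (m : ℕ) (hm : 2 ≤ m)
    (u K : EuclideanSpace ℝ (Fin m) → ℝ)
    (hu : ∀ x : EuclideanSpace ℝ (Fin m), x ≠ 0 → ContDiffAt ℝ 2 u x)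
    (hhom : ∀ t : ℝ, 0 < t → ∀ x : EuclideanSpace ℝ (Fin m), x ≠ 0 → u (t • x) = u x)
    (hsol : SolvesVerticalMeanCurvatureEq m u K)
    (r₁ r₂ : ℝ) (hr₁ : 0 < r₁)
    (hlow : ∀ ξ : EuclideanSpace ℝ (Fin m), ξ ≠ 0 → ‖ξ‖ < r₁ → (m - 1 : ℝ) / ‖ξ‖ < K ξ)
    (hhigh : ∀ ξ : EuclideanSpace ℝ (Fin m), r₂ < ‖ξ‖ → K ξ < (m - 1 : ℝ) / ‖ξ‖) :
    ∀ ξ : EuclideanSpace ℝ (Fin m), ‖ξ‖ = 1 →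
      Real.log r₁ ≤ u ξ ∧ u ξ ≤ Real.log r₂ := by
  have : Nonempty (Fin m) := ⟨⟨0, by omega⟩⟩
  have hS : (Metric.sphere (0 : EuclideanSpace ℝ (Fin m)) 1).Nonempty :=
    NormedSpace.sphere_nonempty.2 zero_le_one
  have hne : ∀ η ∈ Metric.sphere (0 : EuclideanSpace ℝ (Fin m)) 1, η ≠ 0 := fun η hη =>
    ne_zero_of_norm_ne_zero (by simp_all)
  have hcont : ContinuousOn u (Metric.sphere 0 1) := fun η hη =>
    (hu η (hne η hη)).continuousAt.continuousWithinAt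
  obtain ⟨ξ₀, hξ₀, hmax⟩ := (isCompact_sphere 0 1).exists_isMaxOn hS hcont
  obtain ⟨ξ₁, hξ₁, hmin⟩ := (isCompact_sphere 0 1).exists_isMinOn hS hcont
  have hupper := hsol.exp_le_of_isLocalMax (mem_sphere_zero_iff_norm.1 hξ₀) (hu ξ₀ (hne ξ₀ hξ₀))
    (hmax.isLocalMax_of_smul_invariant hhom (hne ξ₀ hξ₀)) hhigh
  have hlower := hsol.le_exp_of_isLocalMin (mem_sphere_zero_iff_norm.1 hξ₁) (hu ξ₁ (hne ξ₁ hξ₁))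
    (hmin.isLocalMin_of_smul_invariant hhom (hne ξ₁ hξ₁)) hlow
  intro ξ hξ
  have hξS : ξ ∈ Metric.sphere (0 : EuclideanSpace ℝ (Fin m)) 1 := mem_sphere_zero_iff_norm.2 hξ
  constructor
  · calc Real.log r₁ ≤ u ξ₁ := (Real.log_le_iff_le_exp hr₁).2 hlower
      _ ≤ u ξ := hmin hξS
  · calc u ξ ≤ u ξ₀ := hmax hξS
      _ = Real.log (Real.exp (u ξ₀)) := (Real.log_exp _).symm
      _ ≤ Real.log r₂ := Real.log_le_log (Real.exp_pos _) hupper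

/-- C⁰ a priori estimate (from the proof of Theorem 2): if `u` is a C², positively
0-homogeneous solution of the vertical mean curvature equation for a positive continuous
`K` with `K(ξ) > (m−1)/‖ξ‖` for `‖ξ‖ < r₁` and `K(ξ) < (m−1)/‖ξ‖` for `‖ξ‖ > r₂`
(`0 < r₁ ≤ 1 ≤ r₂`), then `log r₁ ≤ u ≤ log r₂` on the unit sphere. -/
theorem c0_estimate_vertical_mean_curvature (m : ℕ) (hm : 2 ≤ m)
    (u K : EuclideanSpace ℝ (Fin m) → ℝ)
    (hu : ∀ x : EuclideanSpace ℝ (Fin m), x ≠ 0 → ContDiffAt ℝ 2 u x)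
    (hhom : ∀ t : ℝ, 0 < t → ∀ x : EuclideanSpace ℝ (Fin m), x ≠ 0 → u (t • x) = u x)
    (hKcont : ContinuousOn K {(0 : EuclideanSpace ℝ (Fin m))}ᶜ)
    (hKpos : ∀ x : EuclideanSpace ℝ (Fin m), x ≠ 0 → 0 < K x)
    (hsol : SolvesVerticalMeanCurvatureEq m u K)
    (r₁ r₂ : ℝ) (hr₁ : 0 < r₁) (hr₁1 : r₁ ≤ 1) (h1r₂ : 1 ≤ r₂)
    (hlow : ∀ ξ : EuclideanSpace ℝ (Fin m), ξ ≠ 0 → ‖ξ‖ < r₁ → (m - 1 : ℝ) / ‖ξ‖ < K ξ)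
    (hhigh : ∀ ξ : EuclideanSpace ℝ (Fin m), r₂ < ‖ξ‖ → K ξ < (m - 1 : ℝ) / ‖ξ‖) :
    ∀ ξ : EuclideanSpace ℝ (Fin m), ‖ξ‖ = 1 →
      Real.log r₁ ≤ u ξ ∧ u ξ ≤ Real.log r₂ :=
  c0_estimate_vertical_mean_curvature_general m hm u K hu hhom hsol r₁ r₂ hr₁ hlow hhigh
end

section
/- Let m ≥ 2 and let a ∈ (0, 1). Let K : ℝ^m \ {0} → (0, ∞) be a function satisfying K(ξ) ≤ a(m−1)/‖ξ‖ for every ξ ≠ 0. Then there exists no C² function u : ℝ^m \ {0} → ℝ, positively homogeneous of degree 0, solving the vertical mean curvature equation for K. -/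
open Filter Topology

theorem IsLocalMax.deriv_deriv_nonpos_s10 {f : ℝ → ℝ} {x₀ : ℝ} (hmax : IsLocalMax f x₀)
    (hc : ContinuousAt f x₀) : deriv (deriv f) x₀ ≤ 0 := by
  by_contra! hpos
  have hmin : IsLocalMin f x₀ := isLocalMin_of_deriv_deriv_pos hpos hmax.deriv_eq_zero hc
  have hconst : f =ᶠ[𝓝 x₀] fun _ => f x₀ := by
    filter_upwards [hmin, hmax] with x h₁ h₂ using le_antisymm h₂ h₁
  have hderiv : deriv f =ᶠ[𝓝 x₀] fun _ => 0 := by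
    simpa only [deriv_const'] using hconst.deriv
  simp [hderiv.deriv_eq] at hpos

theorem IsLocalMax.fderiv_fderiv_apply_self_nonpos {E : Type*} [NormedAddCommGroup E]
    [NormedSpace ℝ E] {f : E → ℝ} {x : E} (hmax : IsLocalMax f x) (hf : ContDiffAt ℝ 2 f x)
    (v : E) : fderiv ℝ (fderiv ℝ f) x v v ≤ 0 := by
  set ℓ : ℝ → E := fun t => x + t • v with hℓdef
  have hℓ : ∀ t, HasDerivAt ℓ v t := fun t => by
    simpa [hℓdef] using ((hasDerivAt_id t).smul_const v).const_add x
  have hℓ0 : ℓ 0 = x := by simp [hℓdef]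
  have hℓcont : ContinuousAt ℓ 0 := (hℓ 0).continuousAt
  have hℓtend : Tendsto ℓ (𝓝 0) (𝓝 x) := hℓ0 ▸ hℓcont.tendsto
  have hdiff : ∀ᶠ t in 𝓝 (0 : ℝ), DifferentiableAt ℝ f (ℓ t) :=
    hℓtend.eventually
      ((hf.eventually (by simp)).mono fun y hy => hy.differentiableAt (by norm_num))
  have hderiv : deriv (f ∘ ℓ) =ᶠ[𝓝 0] fun t => fderiv ℝ f (ℓ t) v := by
    filter_upwards [hdiff] with t ht using (ht.hasFDerivAt.comp_hasDerivAt t (hℓ t)).deriv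
  have hD : HasFDerivAt (fderiv ℝ f) (fderiv ℝ (fderiv ℝ f) x) (ℓ 0) :=
    hℓ0 ▸ ((hf.fderiv_right (m := 1) (by norm_num)).differentiableAt (by norm_num)).hasFDerivAt
  have hD2 : HasDerivAt (fun t => fderiv ℝ f (ℓ t) v) (fderiv ℝ (fderiv ℝ f) x v v) 0 :=
    (ContinuousLinearMap.apply ℝ ℝ v).hasFDerivAt.comp_hasDerivAt 0 (hD.comp_hasDerivAt 0 (hℓ 0))
  have hmax' : IsLocalMax (f ∘ ℓ) 0 := (hℓ0 ▸ hmax).comp_continuous hℓcont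
  have hc : ContinuousAt (f ∘ ℓ) 0 := hf.continuousAt.comp_of_eq hℓcont hℓ0
  simpa only [hderiv.deriv_eq, hD2.deriv] using hmax'.deriv_deriv_nonpos_s10 hc

theorem exists_norm_eq_one_isLocalMax_of_smul_invariant {E : Type*} [NormedAddCommGroup E]
    [NormedSpace ℝ E] [ProperSpace E] [Nontrivial E] {u : E → ℝ}
    (hu : ContinuousOn u (Metric.sphere 0 1))
    (hhom : ∀ t : ℝ, 0 < t → ∀ x : E, x ≠ 0 → u (t • x) = u x) :
    ∃ ξ : E, ‖ξ‖ = 1 ∧ IsLocalMax u ξ := by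
  obtain ⟨ξ, hξ, hmax⟩ := (isCompact_sphere (0 : E) 1).exists_isMaxOn
    (NormedSpace.sphere_nonempty.mpr zero_le_one) hu
  have hξ1 : ‖ξ‖ = 1 := mem_sphere_zero_iff_norm.mp hξ
  refine ⟨ξ, hξ1, ?_⟩
  have hξ0 : ξ ≠ 0 := ne_zero_of_norm_ne_zero (by simp [hξ1])
  filter_upwards [isOpen_compl_singleton.mem_nhds hξ0] with x (hx : x ≠ 0)
  have hnx : ‖x‖ ≠ 0 := norm_ne_zero_iff.mpr hx
  calc u x = u (‖x‖⁻¹ • x) := (hhom _ (by positivity) x hx).symm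
    _ ≤ u ξ := hmax (by simp [norm_smul, hnx])

theorem SolvesVerticalMeanCurvatureEq.sum_fderiv_fderiv_eq_of_gradient_eq_zero {m : ℕ}
    {u K : EuclideanSpace ℝ (Fin m) → ℝ} (h : SolvesVerticalMeanCurvatureEq m u K)
    {ξ : EuclideanSpace ℝ (Fin m)} (hξ : ‖ξ‖ = 1) (hgrad : gradient u ξ = 0) :
    ∑ i : Fin m, fderiv ℝ (fderiv ℝ u) ξ (EuclideanSpace.single i 1) (EuclideanSpace.single i 1)
      = (m - 1 : ℝ) - Real.exp (u ξ) * K (Real.exp (u ξ) • ξ) := by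
  simpa [hgrad] using h ξ hξ

theorem nonexistence_small_K_general (m : ℕ) (hm : 2 ≤ m) (a : ℝ) (ha1 : a < 1)
    (K : EuclideanSpace ℝ (Fin m) → ℝ)
    (hKle : ∀ ξ : EuclideanSpace ℝ (Fin m), ξ ≠ 0 → K ξ ≤ a * (m - 1 : ℝ) / ‖ξ‖) :
    ¬ ∃ u : EuclideanSpace ℝ (Fin m) → ℝ,
        (∀ x : EuclideanSpace ℝ (Fin m), x ≠ 0 → ContDiffAt ℝ 2 u x) ∧
        (∀ t : ℝ, 0 < t → ∀ x : EuclideanSpace ℝ (Fin m), x ≠ 0 → u (t • x) = u x) ∧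
        SolvesVerticalMeanCurvatureEq m u K := by
  rintro ⟨u, hu, hhom, heq⟩
  have : Nonempty (Fin m) := ⟨⟨0, by omega⟩⟩
  have hcont : ContinuousOn u (Metric.sphere 0 1) := fun x hx =>
    (hu x (ne_zero_of_mem_unit_sphere ⟨x, hx⟩)).continuousAt.continuousWithinAt
  obtain ⟨ξ, hξ, hmax⟩ := exists_norm_eq_one_isLocalMax_of_smul_invariant hcont hhom
  have hξ0 : ξ ≠ 0 := ne_zero_of_norm_ne_zero (by simp [hξ])
  have hlap := heq.sum_fderiv_fderiv_eq_of_gradient_eq_zero hξ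
    (by simp [gradient, hmax.fderiv_eq_zero])
  have hlap_nonpos : ∑ i : Fin m, fderiv ℝ (fderiv ℝ u) ξ (EuclideanSpace.single i 1)
      (EuclideanSpace.single i 1) ≤ 0 :=
    Finset.sum_nonpos fun i _ => hmax.fderiv_fderiv_apply_self_nonpos (hu ξ hξ0) _
  set r := Real.exp (u ξ)
  have hr : 0 < r := Real.exp_pos _
  have hK : r * K (r • ξ) ≤ a * (m - 1 : ℝ) := by
    have := hKle (r • ξ) (smul_ne_zero hr.ne' hξ0)
    rwa [norm_smul, hξ, mul_one, Real.norm_of_nonneg hr.le, le_div_iff₀' hr] at this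
  have hm1 : (0 : ℝ) < m - 1 := by
    have : (2 : ℝ) ≤ m := by exact_mod_cast hm
    linarith
  linarith [mul_lt_of_lt_one_left hm1 ha1]

/-- Nonexistence (§5.4, Remark 1, first claim): if `K > 0` satisfies
`K(ξ) ≤ a(m−1)/‖ξ‖` for some `a ∈ (0,1)` and all `ξ ≠ 0`, then there is no C²,
positively 0-homogeneous solution of the vertical mean curvature equation for `K`. -/
theorem nonexistence_small_K (m : ℕ) (hm : 2 ≤ m) (a : ℝ) (ha0 : 0 < a) (ha1 : a < 1)
    (K : EuclideanSpace ℝ (Fin m) → ℝ)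
    (hKpos : ∀ ξ : EuclideanSpace ℝ (Fin m), ξ ≠ 0 → 0 < K ξ)
    (hKle : ∀ ξ : EuclideanSpace ℝ (Fin m), ξ ≠ 0 → K ξ ≤ a * (m - 1 : ℝ) / ‖ξ‖) :
    ¬ ∃ u : EuclideanSpace ℝ (Fin m) → ℝ,
        (∀ x : EuclideanSpace ℝ (Fin m), x ≠ 0 → ContDiffAt ℝ 2 u x) ∧
        (∀ t : ℝ, 0 < t → ∀ x : EuclideanSpace ℝ (Fin m), x ≠ 0 → u (t • x) = u x) ∧
        SolvesVerticalMeanCurvatureEq m u K :=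
  nonexistence_small_K_general m hm a ha1 K hKle
end
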